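/- Let A > 0, φ₁ ∈ ℝ, and let (x,t) ∈ ℝ² be such that E := e^{−Ax − iA²t + iφ₁} ≠ 1. Define v₁ = (A/(2i))·1/(1 − E) and the matrix-valued function of k: M(k) = [[(k + v₁)/(k − iA/2), v₁/k],[−w/(k − iA/2), (k − w)/k]], where w := conj(v₁(−x,t)) with v₁(−x,t) = (A/(2i))·1/(1 − e^{Ax − iA²t + iφ₁}). Then: (a) det M(k) = 1 for all k ∉ {0, iA/2}; (b) lim_{k → iA/2} (k − iA/2)·(first column of M(k)) = c₁ · (second column of M evaluated at k = iA/2), where c₁ = (iA/2)·e^{iφ₁}·e^{−Ax − iA²t}; (c) lim_{k → 0} k·(second column of M(k)) = (A/(2i)) · (first column of M evaluated at k = 0); (d) 2i·lim_{k → ∞} k·M₁₂(k) = A/(1 − E). -/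

import Mathlib

/-!
Writing `c = iA/2`, the matrix has the shape `[[(k+v)/(k-c), v/k], [-w/(k-c), (k-w)/k]]`, and
every claim reduces to two algebraic relations between `v = v₁(x,t)`, `w = conj v₁(-x,t)` and `E`:
`v (1 - E) = -c` and `w (1 - E) = -c E`, the second because `conj E(-x,t) = E(x,t)⁻¹`.
Subtracting them gives `v - w = -c`, which makes the determinant `(k + v - w)/(k - c)` equal to `1`;
the residues are values of the numerators at the poles, and `k M₁₂(k) = v` identically.
-/

open Complex Matrix Filter Topology

/-- E = e^{−Ax − iA²t + iφ₁}. -/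
noncomputable def solitonE (A φ₁ x t : ℝ) : ℂ :=
  Complex.exp (-(A : ℂ) * x - I * (A : ℂ) ^ 2 * t + I * φ₁)

/-- v₁(x,t) = (A/2i)·1/(1 − E). -/
noncomputable def solV₁ (A φ₁ x t : ℝ) : ℂ :=
  ((A : ℂ) / (2 * I)) * (1 - solitonE A φ₁ x t)⁻¹

/-- The explicit solution M(x,t,k) of the RH problem for the one-soliton solution:
M(k) = [[(k + v₁)/(k − iA/2), v₁/k],[−w/(k − iA/2), (k − w)/k]] with
w = conj(v₁(−x,t)). -/
noncomputable def solM (A φ₁ x t : ℝ) (k : ℂ) : Matrix (Fin 2) (Fin 2) ℂ :=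
  !![(k + solV₁ A φ₁ x t) / (k - I * A / 2),
     solV₁ A φ₁ x t / k;
     -((starRingEnd ℂ) (solV₁ A φ₁ (-x) t)) / (k - I * A / 2),
     (k - (starRingEnd ℂ) (solV₁ A φ₁ (-x) t)) / k]

open ComplexConjugate

theorem tendsto_sub_mul_div_sub_nhdsNE {K : Type*} [Field K] [TopologicalSpace K] {g : K → K}
    {c : K} (hg : ContinuousAt g c) :
    Tendsto (fun k => (k - c) * (g k / (k - c))) (𝓝[≠] c) (𝓝 (g c)) := by
  refine (hg.tendsto.mono_left nhdsWithin_le_nhds).congr' ?_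
  filter_upwards [self_mem_nhdsWithin] with k hk
  rw [mul_div_cancel₀ _ (sub_ne_zero.mpr hk)]

def rhMatrix {K : Type*} [Field K] (c v w k : K) : Matrix (Fin 2) (Fin 2) K :=
  !![(k + v) / (k - c), v / k; -w / (k - c), (k - w) / k]

section rhMatrix

variable {K : Type*} [Field K] {c v w : K}

theorem det_rhMatrix {k : K} (hk : k ≠ 0) (hkc : k ≠ c) :
    (rhMatrix c v w k).det = (k + v - w) / (k - c) := by
  have hkc' : k - c ≠ 0 := sub_ne_zero.mpr hkc
  rw [rhMatrix, det_fin_two_of]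
  field_simp
  ring

theorem det_rhMatrix_eq_one (hvw : v - w = -c) {k : K} (hk : k ≠ 0) (hkc : k ≠ c) :
    (rhMatrix c v w k).det = 1 := by
  rw [det_rhMatrix hk hkc, add_sub_assoc, hvw, ← sub_eq_add_neg]
  exact div_self (sub_ne_zero.mpr hkc)

variable [TopologicalSpace K] [IsTopologicalRing K]

theorem tendsto_sub_mul_rhMatrix_zero (hc : c ≠ 0) {E : K} (hv : v * (1 - E) = -c)
    (hw : w * (1 - E) = -c * E) (i : Fin 2) :
    Tendsto (fun k => (k - c) * rhMatrix c v w k i 0) (𝓝[≠] c)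
      (𝓝 (c * E * rhMatrix c v w c i 1)) := by
  fin_cases i
  · convert tendsto_sub_mul_div_sub_nhdsNE (g := fun k => k + v) (c := c) (by fun_prop) using 2
    · simp [rhMatrix]
    · simp only [rhMatrix, sub_self, div_zero, Fin.zero_eta, Fin.isValue, of_apply, cons_val',
        cons_val_one, cons_val_fin_one, cons_val_zero]
      field_simp
      linear_combination -hv
  · convert tendsto_sub_mul_div_sub_nhdsNE (g := fun _ => -w) (c := c) (by fun_prop) using 2
    · simp [rhMatrix]
    · simp only [rhMatrix, sub_self, div_zero, Fin.mk_one, Fin.isValue, of_apply, cons_val',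
        cons_val_one, cons_val_fin_one]
      field_simp
      linear_combination hw

theorem tendsto_mul_rhMatrix_one (hc : c ≠ 0) (i : Fin 2) :
    Tendsto (fun k => k * rhMatrix c v w k i 1) (𝓝[≠] 0) (𝓝 (-c * rhMatrix c v w 0 i 0)) := by
  fin_cases i
  · convert tendsto_sub_mul_div_sub_nhdsNE (g := fun _ => v) (c := (0 : K)) (by fun_prop) using 2
    · simp [rhMatrix]
    · simp [rhMatrix, div_neg, mul_div_cancel₀ _ hc]
  · convert tendsto_sub_mul_div_sub_nhdsNE (g := fun k => k - w) (c := (0 : K)) (by fun_prop)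
      using 2
    · simp [rhMatrix]
    · simp [rhMatrix, div_neg, mul_div_cancel₀ _ hc]

end rhMatrix

theorem tendsto_mul_rhMatrix_zero_one {K : Type*} [NormedField K] {c v w : K} :
    Tendsto (fun k => k * rhMatrix c v w k 0 1) (Bornology.cobounded K) (𝓝 v) := by
  refine tendsto_const_nhds.congr' ?_
  filter_upwards [Bornology.eventually_ne_cobounded 0] with k hk
  simp [rhMatrix, mul_div_cancel₀ _ hk]

theorem solM_eq_rhMatrix (A φ₁ x t : ℝ) (k : ℂ) :
    solM A φ₁ x t k = rhMatrix (I * A / 2) (solV₁ A φ₁ x t) (conj (solV₁ A φ₁ (-x) t)) k :=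
  rfl

theorem exp_mul_exp_eq_solitonE (A φ₁ x t : ℝ) :
    exp (I * φ₁) * exp (-(A : ℂ) * x - I * (A : ℂ) ^ 2 * t) = solitonE A φ₁ x t := by
  rw [← exp_add, solitonE]
  congr 1
  ring

theorem conj_solitonE_neg (A φ₁ x t : ℝ) :
    conj (solitonE A φ₁ (-x) t) = (solitonE A φ₁ x t)⁻¹ := by
  rw [solitonE, solitonE, ← exp_conj, ← exp_neg]
  congr 1
  simp only [map_add, map_sub, map_neg, map_mul, map_pow, conj_I, conj_ofReal]
  push_cast
  ring

theorem ofReal_div_two_mul_I (A : ℝ) : (A : ℂ) / (2 * I) = -(I * A / 2) := by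
  field_simp
  linear_combination (A : ℂ) * I_sq

theorem solV₁_mul_one_sub (A φ₁ x t : ℝ) (hE : solitonE A φ₁ x t ≠ 1) :
    solV₁ A φ₁ x t * (1 - solitonE A φ₁ x t) = -(I * A / 2) := by
  rw [solV₁, ofReal_div_two_mul_I, mul_assoc, inv_mul_cancel₀ (sub_ne_zero.mpr hE.symm), mul_one]

theorem conj_solV₁_neg_mul_one_sub (A φ₁ x t : ℝ) (hE : solitonE A φ₁ x t ≠ 1) :
    conj (solV₁ A φ₁ (-x) t) * (1 - solitonE A φ₁ x t) = -(I * A / 2) * solitonE A φ₁ x t := by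
  have hE0 : solitonE A φ₁ x t ≠ 0 := exp_ne_zero _
  have hE1 : solitonE A φ₁ x t - 1 ≠ 0 := sub_ne_zero.mpr hE
  rw [solV₁, map_mul, map_inv₀, map_sub, map_one, conj_solitonE_neg, ofReal_div_two_mul_I]
  simp only [map_neg, map_div₀, map_mul, conj_I, conj_ofReal, map_ofNat]
  field_simp
  ring

/-- Properties of the explicit one-soliton RH solution: unit determinant, the residue
conditions at k = iA/2 and k = 0, and the reconstruction formula
2i·lim_{k→∞} k M₁₂(k) = A/(1 − E). -/
theorem one_soliton_rh_solution (A φ₁ : ℝ) (hA : 0 < A) (x t : ℝ)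
    (hE : solitonE A φ₁ x t ≠ 1) :
    (∀ k : ℂ, k ≠ 0 → k ≠ I * A / 2 → (solM A φ₁ x t k).det = 1) ∧
    (∀ i : Fin 2,
      Tendsto (fun k : ℂ => (k - I * A / 2) * solM A φ₁ x t k i 0)
        (𝓝[≠] (I * A / 2))
        (𝓝 ((I * A / 2) * Complex.exp (I * φ₁)
              * Complex.exp (-(A : ℂ) * x - I * (A : ℂ) ^ 2 * t)
            * solM A φ₁ x t (I * A / 2) i 1))) ∧
    (∀ i : Fin 2,
      Tendsto (fun k : ℂ => k * solM A φ₁ x t k i 1) (𝓝[≠] (0 : ℂ))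
        (𝓝 (((A : ℂ) / (2 * I)) * solM A φ₁ x t 0 i 0))) ∧
    Tendsto (fun k : ℂ => 2 * I * (k * solM A φ₁ x t k 0 1)) (Bornology.cobounded ℂ)
      (𝓝 ((A : ℂ) / (1 - solitonE A φ₁ x t))) := by
  have hc : I * (A : ℂ) / 2 ≠ 0 := by simp [I_ne_zero, hA.ne']
  have hv := solV₁_mul_one_sub A φ₁ x t hE
  have hw := conj_solV₁_neg_mul_one_sub A φ₁ x t hE
  have hvw : solV₁ A φ₁ x t - conj (solV₁ A φ₁ (-x) t) = -(I * A / 2) := by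
    have h1E : 1 - solitonE A φ₁ x t ≠ 0 := sub_ne_zero.mpr hE.symm
    apply mul_right_cancel₀ h1E
    linear_combination hv - hw
  simp only [solM_eq_rhMatrix, ofReal_div_two_mul_I, mul_assoc (I * (A : ℂ) / 2),
    exp_mul_exp_eq_solitonE]
  refine ⟨fun k => det_rhMatrix_eq_one hvw, fun i => ?_, tendsto_mul_rhMatrix_one hc,
    ?_⟩
  · simpa only [mul_assoc] using tendsto_sub_mul_rhMatrix_zero hc hv hw i
  · have hlim : 2 * I * solV₁ A φ₁ x t = A / (1 - solitonE A φ₁ x t) := by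
      rw [solV₁]
      field_simp
    rw [← hlim]
    exact tendsto_mul_rhMatrix_zero_one.const_mul _
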